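/- arXiv:2604.08006 — 3 statements merged into one kernel-verified Lean document; each statement's English description precedes it below -/
import Mathlib

section
/- Let n ≥ 1 and let D_0, …, D_{n−1}, A_0, …, A_{n−1}, d_0, …, d_{n−1} be positive real numbers such that A_i·d_i ≤ D_i/2 for all 0 ≤ i ≤ n−1, and d_i·A_{i+1} ≥ 1 for all 0 ≤ i ≤ n−2. Then Σ_{i=0}^{n−1} (Π_{j=0}^{i−1} D_j)·A_i ≤ (Π_{j=0}^{n−1} D_j)/d_{n−1}. -/
theorem close_return_composition (n : ℕ) (hn : 1 ≤ n) (D A d : ℕ → ℝ)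
    (hD : ∀ i < n, 0 < D i) (hA : ∀ i < n, 0 < A i) (hd : ∀ i < n, 0 < d i)
    (hclose : ∀ i < n, A i * d i ≤ D i / 2)
    (hlink : ∀ i, i + 1 ≤ n - 1 → d i * A (i + 1) ≥ 1) :
    ∑ i ∈ Finset.range n, (∏ j ∈ Finset.range i, D j) * A i ≤
      (∏ j ∈ Finset.range n, D j) / d (n - 1) := by
  induction n with
  | zero => omega
  | succ m ih =>
    rcases Nat.eq_zero_or_pos m with rfl | hm
    · have h0 := hclose 0 (by norm_num)
      have hd0 := hd 0 (by norm_num)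
      have hD0 := hD 0 (by norm_num)
      simp only [zero_add, Finset.sum_range_one, Finset.prod_range_one, Finset.prod_range_zero, one_mul,
        Nat.add_sub_cancel]
      rw [le_div_iff₀ hd0]
      nlinarith
    · have hSm : ∑ i ∈ Finset.range m, (∏ j ∈ Finset.range i, D j) * A i ≤
          (∏ j ∈ Finset.range m, D j) / d (m - 1) := by
        apply ih hm
        · exact fun i hi => hD i (by omega)
        · exact fun i hi => hA i (by omega)
        · exact fun i hi => hd i (by omega)
        · exact fun i hi => hclose i (by omega)
        · exact fun i hi => hlink i (by omega)
      have hPm : 0 < ∏ j ∈ Finset.range m, D j :=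
        Finset.prod_pos fun j hj => hD j (by simp at hj; omega)
      have hdm1 : 0 < d (m - 1) := hd (m - 1) (by omega)
      have hAm : 0 < A m := hA m (by omega)
      have hdm : 0 < d m := hd m (by omega)
      have hDm : 0 < D m := hD m (by omega)
      have hlinkm : d (m - 1) * A m ≥ 1 := by
        have := hlink (m - 1) (by omega)
        rwa [Nat.sub_add_cancel hm] at this
      have h1 : (∏ j ∈ Finset.range m, D j) / d (m - 1) ≤
          (∏ j ∈ Finset.range m, D j) * A m := by
        rw [div_le_iff₀ hdm1]
        nlinarith
      have hclosem := hclose m (by omega)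
      rw [Finset.sum_range_succ, Nat.add_sub_cancel, Finset.prod_range_succ]
      rw [le_div_iff₀ hdm]
      have key : (∏ j ∈ Finset.range m, D j) * A m * d m ≤
          (∏ j ∈ Finset.range m, D j) * (D m / 2) := by
        rw [mul_assoc]
        exact mul_le_mul_of_nonneg_left hclosem hPm.le
      nlinarith [hSm.trans h1]
end

section
/- Let (q_j)_{j≥0} be a sequence of nonnegative real numbers and let (γ_j)_{j≥1} ∈ {0,1}^ℕ be such that q_j > 0 implies γ_j = 1 for every j ≥ 1. Define Q(s) = Σ_{j=0}^{s} q_j and Γ(s) = #{1 ≤ j ≤ s : γ_j = 1}. Let κ > 0 and m ≥ 0 and suppose that (i) Q(s) > min{m, κΓ(s)} for every s ≥ 0, and (ii) Q(s) ≥ m for some s. Then there exists an integer s ≥ 0 such that Q(s) > max{m − κ, κΓ(s)}. -/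
theorem depth_return_combinatorial (q : ℕ → ℝ) (hq : ∀ j, 0 ≤ q j)
    (γ : ℕ → Bool) (hγ : ∀ j, 1 ≤ j → 0 < q j → γ j = true)
    (κ m : ℝ) (hκ : 0 < κ) (hm : 0 ≤ m)
    (hQΓ : ∀ s : ℕ, (∑ j ∈ Finset.range (s + 1), q j) >
      min m (κ * ((Finset.Icc 1 s).filter (fun j => γ j = true)).card))
    (hQm : ∃ s : ℕ, (∑ j ∈ Finset.range (s + 1), q j) ≥ m) :
    ∃ s : ℕ, (∑ j ∈ Finset.range (s + 1), q j) >
      max (m - κ) (κ * ((Finset.Icc 1 s).filter (fun j => γ j = true)).card) := by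
  by_contra hcon
  push_neg at hcon
  set Q : ℕ → ℝ := fun s => ∑ j ∈ Finset.range (s + 1), q j with hQdef
  set G : ℕ → ℕ := fun s => ((Finset.Icc 1 s).filter (fun j => γ j = true)).card with hGdef
  -- dichotomy
  have dich : ∀ s, Q s ≤ m - κ ∨ m < Q s := by
    intro s
    by_cases h1 : Q s ≤ m - κ
    · exact Or.inl h1
    · right
      push_neg at h1
      have hmax := hcon s
      have hQle : Q s ≤ κ * G s := by
        rcases max_cases (m - κ) (κ * (G s : ℝ)) with ⟨he, _⟩ | ⟨he, _⟩
        · rw [he] at hmax; exact absurd hmax (not_le.mpr h1)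
        · rwa [he] at hmax
      have hmin := hQΓ s
      rcases min_cases m (κ * (G s : ℝ)) with ⟨he, _⟩ | ⟨he, _⟩
      · rw [he] at hmin; exact hmin
      · rw [he] at hmin; exact absurd hmin (not_lt.mpr hQle)
  have hG0 : G 0 = 0 := by simp [hGdef]
  have hQ0 : Q 0 ≤ m - κ := by
    rcases dich 0 with h | h
    · exact h
    · exfalso
      have h2 : Q 0 ≤ max (m - κ) (κ * (G 0 : ℝ)) := hcon 0
      rw [hG0] at h2
      simp only [Nat.cast_zero, mul_zero] at h2
      rcases le_max_iff.mp h2 with h' | h' <;> linarith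
  obtain ⟨s0, hs0⟩ := hQm
  have hex : ∃ t, ¬ (Q t ≤ m - κ) := ⟨s0, by push_neg; show m - κ < Q s0; linarith⟩
  classical
  set t := Nat.find hex with htdef
  have ht : ¬ (Q t ≤ m - κ) := Nat.find_spec hex
  have ht1 : 1 ≤ t := by
    rcases Nat.eq_zero_or_pos t with h0 | h0
    · exact absurd (h0 ▸ hQ0) ht
    · exact h0
  have hprev : Q (t - 1) ≤ m - κ := by
    have := Nat.find_min hex (show t - 1 < t by omega)
    exact not_not.mp this
  have hQt : m < Q t := (dich t).resolve_left ht
  push_neg at ht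
  have hQtG : Q t ≤ κ * G t := by
    have hmax := hcon t
    rcases max_cases (m - κ) (κ * (G t : ℝ)) with ⟨he, _⟩ | ⟨he, _⟩
    · rw [he] at hmax; linarith
    · rwa [he] at hmax
  -- G t ≤ G (t-1) + 1
  have hGstep : G t ≤ G (t - 1) + 1 := by
    have hsub : (Finset.Icc 1 t).filter (fun j => γ j = true) ⊆
        insert t ((Finset.Icc 1 (t - 1)).filter (fun j => γ j = true)) := by
      intro x hx
      simp only [Finset.mem_filter, Finset.mem_Icc] at hx
      by_cases hxt : x = t
      · simp [hxt]
      · simp only [Finset.mem_insert, Finset.mem_filter, Finset.mem_Icc]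
        right
        exact ⟨⟨hx.1.1, by omega⟩, hx.2⟩
    calc G t ≤ (insert t ((Finset.Icc 1 (t - 1)).filter (fun j => γ j = true))).card :=
          Finset.card_le_card hsub
      _ ≤ G (t - 1) + 1 := Finset.card_insert_le _ _
  -- Q (t-1) > κ * G (t-1)
  have hprevG : κ * G (t - 1) < Q (t - 1) := by
    have hmin := hQΓ (t - 1)
    rcases min_cases m (κ * (G (t - 1) : ℝ)) with ⟨he, _⟩ | ⟨he, _⟩
    · rw [he] at hmin; linarith
    · rwa [he] at hmin
  have hcast : (G t : ℝ) ≤ (G (t - 1) : ℝ) + 1 := by exact_mod_cast hGstep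
  have : κ * (G t : ℝ) ≤ κ * ((G (t - 1) : ℝ) + 1) :=
    mul_le_mul_of_nonneg_left hcast hκ.le
  nlinarith
end

section
/- Let C ≥ 1 and let 𝒟_C be the set of functions ψ ∈ L¹([0,1]) for which there exists a subinterval I_ψ ⊆ [0,1] such that: (1) |I_ψ| ≥ 1/C; (2) ψ = 0 outside I_ψ; (3) ψ > 0 on I_ψ; (4) |ψ(x) − ψ(y)| ≤ C·ψ(x)·|x − y| for all x, y ∈ I_ψ; (5) ∫₀¹ ψ = 1. Then 𝒟_C is a compact subset of L¹([0,1]). -/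
/-!
A density `g` of the class is determined by its support interval `[a, b]` and its values there.
On `[a, b]` the multiplicative Lipschitz condition gives the Harnack bound `g y ≤ (1 + C) g x`;
averaging over `x` with `∫ g = 1` and `b - a ≥ 1 / C` gives `g ≤ C (1 + C)`. Extending `g|[a,b]`
constantly beyond the endpoints therefore yields a function on `[0, 1]` in a set that is compact
by Arzelà–Ascoli, and the class is the image of a compact set of triples `(a, b, f)` under
`(a, b, f) ↦ 1_[a,b] f`. This map is continuous into `L¹`, since moving the endpoints changes the
function only on a set of small measure. Positivity on `[a, b]` survives limits because a zero
would propagate over all of `[a, b]` and contradict `∫ g = 1`.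
-/

open MeasureTheory Set Filter BoundedContinuousFunction
open scoped symmDiff

namespace DensityClass

section MulLipschitzBox

variable {X : Type*} [PseudoMetricSpace X]

def mulLipschitzBox (C M : ℝ) : Set (X →ᵇ ℝ) :=
  {f | (∀ x, f x ∈ Icc 0 M) ∧ ∀ x y, |f x - f y| ≤ C * f x * dist x y}

lemma isClosed_mulLipschitzBox (C M : ℝ) : IsClosed (mulLipschitzBox (X := X) C M) := by
  simp only [mulLipschitzBox, ofPred_and, ofPred_forall]
  exact (isClosed_iInter fun x => isClosed_Icc.preimage (continuous_eval_const x)).inter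
    (isClosed_iInter fun x => isClosed_iInter fun y =>
      isClosed_le ((continuous_eval_const x).sub (continuous_eval_const y)).abs
        ((continuous_const.mul (continuous_eval_const x)).mul continuous_const))

lemma lipschitzWith_of_mem_mulLipschitzBox {C M : ℝ} (hC : 0 ≤ C) {f : X →ᵇ ℝ}
    (hf : f ∈ mulLipschitzBox C M) : LipschitzWith (C * M).toNNReal f :=
  LipschitzWith.of_dist_le' fun x y =>
    (hf.2 x y).trans (by gcongr; exact (hf.1 x).2)

lemma isCompact_mulLipschitzBox [CompactSpace X] {C : ℝ} (hC : 0 ≤ C) (M : ℝ) :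
    IsCompact (mulLipschitzBox (X := X) C M) :=
  arzela_ascoli₂ (Icc 0 M) isCompact_Icc _ (isClosed_mulLipschitzBox C M)
    (fun _ x hf => hf.1 x) <|
    (LipschitzWith.uniformEquicontinuous _ _ fun f =>
      lipschitzWith_of_mem_mulLipschitzBox hC f.2).equicontinuous

end MulLipschitzBox

lemma edist_indicator_indicator_le {α : Type*} {s t : Set α} {F G : α → ℝ} {δ B : ℝ}
    (hFG : ∀ x, dist (F x) (G x) ≤ δ) (hG : ∀ x, |G x| ≤ B) (x : α) :
    edist (s.indicator F x) (t.indicator G x) ≤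
      ENNReal.ofReal δ + (s ∆ t).indicator (fun _ => ENNReal.ofReal B) x := by
  have hδ : 0 ≤ δ := dist_nonneg.trans (hFG x)
  have hB : 0 ≤ B := (abs_nonneg _).trans (hG x)
  by_cases hs : x ∈ s <;> by_cases ht : x ∈ t
  · simp only [indicator_of_mem hs, indicator_of_mem ht, edist_dist]
    exact (ENNReal.ofReal_le_ofReal (hFG x)).trans le_self_add
  · have hF : |F x| ≤ δ + B := by
      have := dist_triangle (F x) (G x) 0
      rw [Real.dist_0_eq_abs, Real.dist_0_eq_abs] at this
      linarith [hFG x, hG x]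
    rw [indicator_of_mem hs, indicator_of_notMem ht,
      indicator_of_mem (show x ∈ s ∆ t from Or.inl ⟨hs, ht⟩), edist_dist,
      Real.dist_0_eq_abs, ← ENNReal.ofReal_add hδ hB]
    exact ENNReal.ofReal_le_ofReal hF
  · rw [indicator_of_notMem hs, indicator_of_mem ht,
      indicator_of_mem (show x ∈ s ∆ t from Or.inr ⟨ht, hs⟩), edist_dist,
      dist_comm, Real.dist_0_eq_abs]
    exact (ENNReal.ofReal_le_ofReal (hG x)).trans le_add_self
  · simp [indicator_of_notMem hs, indicator_of_notMem ht]

lemma Icc_symmDiff_Icc_subset (a b a' b' : ℝ) :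
    Icc a b ∆ Icc a' b' ⊆ uIcc a a' ∪ uIcc b b' := by
  rintro x (⟨⟨hax, hxb⟩, hx'⟩ | ⟨⟨hax, hxb⟩, hx'⟩) <;>
    rcases not_and_or.mp hx' with h | h <;> rw [not_le] at h
  exacts [Or.inl (Icc_subset_uIcc ⟨hax, h.le⟩), Or.inr (Icc_subset_uIcc' ⟨h.le, hxb⟩),
    Or.inl (Icc_subset_uIcc' ⟨hax, h.le⟩), Or.inr (Icc_subset_uIcc ⟨h.le, hxb⟩)]

lemma volume_Icc_symmDiff_Icc_le (a b a' b' : ℝ) :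
    volume (Icc a b ∆ Icc a' b') ≤ ENNReal.ofReal |a - a'| + ENNReal.ofReal |b - b'| := by
  calc volume (Icc a b ∆ Icc a' b') ≤ volume (uIcc a a' ∪ uIcc b b') :=
        measure_mono (Icc_symmDiff_Icc_subset a b a' b')
    _ ≤ volume (uIcc a a') + volume (uIcc b b') := measure_union_le _ _
    _ = _ := by
      rw [Real.volume_interval, Real.volume_interval, abs_sub_comm a', abs_sub_comm b']

local notation "μ₀₁" => volume.restrict (Icc (0 : ℝ) 1)

abbrev Param := ℝ × ℝ × (Icc (0 : ℝ) 1 →ᵇ ℝ)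

noncomputable def profile (p : Param) : ℝ → ℝ :=
  (Icc p.1 p.2.1).indicator (IccExtend zero_le_one p.2.2)

lemma abs_IccExtend_le {a b : ℝ} (h : a ≤ b) (f : Icc a b →ᵇ ℝ) (x : ℝ) :
    |IccExtend h f x| ≤ ‖f‖ :=
  f.norm_coe_le_norm _

lemma integrable_profile (p : Param) : Integrable (profile p) μ₀₁ :=
  memLp_one_iff_integrable.mp <|
    MemLp.of_bound
      (p.2.2.continuous.Icc_extend'.aestronglyMeasurable.indicator measurableSet_Icc) ‖p.2.2‖ <|
      Eventually.of_forall fun x =>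
        (norm_indicator_le_norm_self _ x).trans (abs_IccExtend_le _ p.2.2 x)

noncomputable def profileL1 (p : Param) : Lp ℝ 1 μ₀₁ :=
  (integrable_profile p).toL1 _

lemma dist_profileL1_le (p q : Param) :
    dist (profileL1 p) (profileL1 q) ≤
      dist p.2.2 q.2.2 + ‖q.2.2‖ * (|p.1 - q.1| + |p.2.1 - q.2.1|) := by
  have hpt := edist_indicator_indicator_le (s := Icc p.1 p.2.1) (t := Icc q.1 q.2.1)
    (fun x => dist_coe_le_dist (f := p.2.2) (g := q.2.2) (projIcc 0 1 zero_le_one x))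
    (abs_IccExtend_le _ q.2.2)
  have hsymm : μ₀₁ (Icc p.1 p.2.1 ∆ Icc q.1 q.2.1) ≤
      ENNReal.ofReal |p.1 - q.1| + ENNReal.ofReal |p.2.1 - q.2.1| :=
    (Measure.restrict_le_self _).trans (volume_Icc_symmDiff_Icc_le _ _ _ _)
  have hμ : μ₀₁ univ = 1 := by simp
  rw [profileL1, profileL1, dist_edist, Integrable.edist_toL1_toL1]
  refine ENNReal.toReal_le_of_le_ofReal (by positivity) ((lintegral_mono hpt).trans ?_)
  rw [lintegral_add_left measurable_const, lintegral_const, hμ, mul_one,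
    lintegral_indicator_const ((measurableSet_Icc).symmDiff measurableSet_Icc),
    ENNReal.ofReal_add dist_nonneg (by positivity), ENNReal.ofReal_mul (norm_nonneg _),
    ENNReal.ofReal_add (abs_nonneg _) (abs_nonneg _)]
  gcongr

lemma continuous_profileL1 : Continuous profileL1 := by
  refine continuous_iff_continuousAt.mpr fun q => tendsto_iff_dist_tendsto_zero.mpr ?_
  refine squeeze_zero (fun _ => dist_nonneg) (fun p => dist_profileL1_le p q) ?_
  have : Continuous fun p : Param =>
      dist p.2.2 q.2.2 + ‖q.2.2‖ * (|p.1 - q.1| + |p.2.1 - q.2.1|) := by fun_prop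
  simpa using this.tendsto q

lemma le_of_abs_sub_le_mul_of_setIntegral_eq_one {g : ℝ → ℝ} {a b C : ℝ} (hC : 0 < C)
    (hab1 : b - a ≤ 1) (hlen : 1 / C ≤ b - a) (hg : ∀ x ∈ Icc a b, 0 ≤ g x)
    (hmul : ∀ x ∈ Icc a b, ∀ y ∈ Icc a b, |g x - g y| ≤ C * g x * |x - y|)
    (hint : ∫ x in Icc a b, g x = 1) {y : ℝ} (hy : y ∈ Icc a b) : g y ≤ C * (1 + C) := by
  have hba : 0 < b - a := (one_div_pos.mpr hC).trans_le hlen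
  have harnack : ∀ x ∈ Icc a b, g y / (1 + C) ≤ g x := by
    intro x hx
    have hxy : |x - y| ≤ 1 :=
      abs_sub_le_iff.mpr ⟨by linarith [hx.2, hy.1], by linarith [hy.2, hx.1]⟩
    have hosc : g y - g x ≤ C * g x :=
      calc g y - g x ≤ |g x - g y| := by rw [abs_sub_comm]; exact le_abs_self _
        _ ≤ C * g x * |x - y| := hmul x hx y hy
        _ ≤ C * g x := mul_le_of_le_one_right (mul_nonneg hC.le (hg x hx)) hxy
    rw [div_le_iff₀ (by positivity)]
    linarith
  have hgint : IntegrableOn g (Icc a b) := Integrable.of_integral_ne_zero (by simp [hint])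
  have hmean := setIntegral_ge_of_const_le_real measurableSet_Icc (by simp) harnack hgint
  rw [hint, Real.volume_real_Icc_of_le (sub_pos.mp hba).le] at hmean
  rw [div_le_iff₀ hC] at hlen
  have hgy : 0 ≤ g y := hg y hy
  rw [div_mul_eq_mul_div, div_le_one (by positivity)] at hmean
  nlinarith

lemma exists_mem_mulLipschitzBox_eqOn {g : ℝ → ℝ} {a b C M : ℝ} (hC : 0 ≤ C) (hab : a ≤ b)
    (hsub : Icc a b ⊆ Icc 0 1) (hg : ∀ x ∈ Icc a b, g x ∈ Icc 0 M)
    (hmul : ∀ x ∈ Icc a b, ∀ y ∈ Icc a b, |g x - g y| ≤ C * g x * |x - y|) :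
    ∃ f ∈ mulLipschitzBox C M, EqOn (IccExtend zero_le_one f) g (Icc a b) := by
  have hcont : ContinuousOn g (Icc a b) :=
    (LipschitzOnWith.of_dist_le' (K := C * M) fun x hx y hy => by
      rw [Real.dist_eq, Real.dist_eq]
      exact (hmul x hx y hy).trans (by gcongr; exact (hg x hx).2)).continuousOn
  let f : Icc (0 : ℝ) 1 →ᵇ ℝ := mkOfCompact
    ⟨fun z => g (projIcc a b hab z),
      hcont.comp_continuous (by fun_prop) fun z => (projIcc a b hab z).2⟩
  refine ⟨f, ⟨fun z => hg _ (projIcc a b hab z).2, fun z w => ?_⟩, fun x hx => ?_⟩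
  · refine (hmul _ (projIcc a b hab z).2 _ (projIcc a b hab w).2).trans ?_
    rw [Subtype.dist_eq, Real.dist_eq]
    exact mul_le_mul_of_nonneg_left (abs_projIcc_sub_projIcc hab)
      (mul_nonneg hC (hg _ (projIcc a b hab z).2).1)
  · rw [IccExtend_of_mem _ _ (hsub hx)]
    show g (projIcc a b hab x) = g x
    rw [projIcc_of_mem hab hx]

def paramSet (C : ℝ) : Set Param :=
  Icc 0 1 ×ˢ Icc 0 1 ×ˢ mulLipschitzBox C (C * (1 + C)) ∩ {p | 1 / C ≤ p.2.1 - p.1} ∩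
    {p | ∫ x, profile p x ∂μ₀₁ = 1}

lemma isCompact_paramSet {C : ℝ} (hC : 0 ≤ C) : IsCompact (paramSet C) := by
  have hint : Continuous fun p => ∫ x, profile p x ∂μ₀₁ :=
    (continuous_integral.comp continuous_profileL1).congr fun p =>
      L1.integral_of_fun_eq_integral (integrable_profile p)
  exact ((isCompact_Icc.prod (isCompact_Icc.prod (isCompact_mulLipschitzBox hC _))).inter_right
    (isClosed_le continuous_const (by fun_prop))).inter_right (isClosed_eq hint continuous_const)

def densityClass (C : ℝ) : Set (Lp ℝ 1 μ₀₁) :=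
  {ψ | ∃ a b : ℝ, 0 ≤ a ∧ a < b ∧ b ≤ 1 ∧ 1 / C ≤ b - a ∧
    ∃ g : ℝ → ℝ,
      (ψ : ℝ → ℝ) =ᵐ[μ₀₁] g ∧
      (∀ x ∉ Icc a b, g x = 0) ∧
      (∀ x ∈ Icc a b, 0 < g x) ∧
      (∀ x ∈ Icc a b, ∀ y ∈ Icc a b, |g x - g y| ≤ C * g x * |x - y|) ∧
      ∫ x in Icc (0 : ℝ) 1, g x = 1}

lemma profileL1_mem_densityClass {C : ℝ} (hC : 0 < C) {p : Param} (hp : p ∈ paramSet C) :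
    profileL1 p ∈ densityClass C := by
  simp only [paramSet, mem_inter_iff, mem_prod, mem_ofPred_eq] at hp
  obtain ⟨⟨⟨⟨ha, -⟩, ⟨-, hb⟩, hf_range, hf_mul⟩, hlen⟩, hint⟩ := hp
  have hsub : Icc p.1 p.2.1 ⊆ Icc 0 1 := Icc_subset_Icc ha hb
  have hprofile : ∀ x (hx : x ∈ Icc p.1 p.2.1), profile p x = p.2.2 ⟨x, hsub hx⟩ := fun x hx => by
    rw [profile, indicator_of_mem hx, IccExtend_of_mem]
  have hmul : ∀ x ∈ Icc p.1 p.2.1, ∀ y ∈ Icc p.1 p.2.1,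
      |profile p x - profile p y| ≤ C * profile p x * |x - y| := fun x hx y hy => by
    simpa only [hprofile x hx, hprofile y hy, Subtype.dist_eq, Real.dist_eq] using
      hf_mul ⟨x, hsub hx⟩ ⟨y, hsub hy⟩
  have hpos : ∀ x ∈ Icc p.1 p.2.1, 0 < profile p x := by
    intro x hx
    refine (hprofile x hx ▸ (hf_range _).1).lt_of_ne fun h0 => ?_
    have hzero : profile p = 0 := funext fun y => by
      by_cases hy : y ∈ Icc p.1 p.2.1
      · simpa [← h0] using hmul x hx y hy
      · exact indicator_of_notMem hy _
    simp [hzero] at hint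
  exact ⟨p.1, p.2.1, ha, by linarith [one_div_pos.mpr hC], hb, hlen, profile p,
    Integrable.coeFn_toL1 _, fun x hx => indicator_of_notMem hx _, hpos, hmul, hint⟩

lemma exists_mem_paramSet_profileL1_eq {C : ℝ} (hC : 0 < C) {ψ : Lp ℝ 1 μ₀₁}
    (hψ : ψ ∈ densityClass C) : ∃ p ∈ paramSet C, profileL1 p = ψ := by
  obtain ⟨a, b, ha, hab, hb, hlen, g, hψg, hg0, hgpos, hgmul, hgint⟩ := hψ
  have hsub : Icc a b ⊆ Icc 0 1 := Icc_subset_Icc ha hb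
  have hint : ∫ x in Icc a b, g x = 1 := by
    rwa [← setIntegral_eq_of_subset_of_forall_sdiff_eq_zero measurableSet_Icc hsub
      fun x hx => hg0 x hx.2]
  have hrange : ∀ x ∈ Icc a b, g x ∈ Icc 0 (C * (1 + C)) := fun x hx =>
    ⟨(hgpos x hx).le, le_of_abs_sub_le_mul_of_setIntegral_eq_one hC (by linarith) hlen
      (fun y hy => (hgpos y hy).le) hgmul hint hx⟩
  obtain ⟨f, hf, hfg⟩ := exists_mem_mulLipschitzBox_eqOn hC.le hab.le hsub hrange hgmul
  have hprofile : profile (a, b, f) = g := funext fun x => by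
    by_cases hx : x ∈ Icc a b
    · exact (indicator_of_mem hx _).trans (hfg hx)
    · exact (indicator_of_notMem hx _).trans (hg0 x hx).symm
  refine ⟨(a, b, f), ⟨⟨⟨⟨ha, by linarith⟩, ⟨by linarith, hb⟩, hf⟩, hlen⟩,
    by rwa [mem_ofPred_eq, hprofile]⟩, ?_⟩
  exact Lp.ext ((Integrable.coeFn_toL1 _).trans (hprofile ▸ hψg.symm))

lemma densityClass_eq_image {C : ℝ} (hC : 0 < C) :
    densityClass C = profileL1 '' paramSet C :=
  Subset.antisymm (fun _ hψ => exists_mem_paramSet_profileL1_eq hC hψ)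
    (image_subset_iff.mpr fun _ hp => profileL1_mem_densityClass hC hp)

end DensityClass

open DensityClass in
theorem density_class_compact (C : ℝ) (hC : 1 ≤ C) :
    IsCompact {ψ : Lp ℝ 1 (volume.restrict (Set.Icc (0 : ℝ) 1)) |
      ∃ a b : ℝ, 0 ≤ a ∧ a < b ∧ b ≤ 1 ∧ 1 / C ≤ b - a ∧
        ∃ g : ℝ → ℝ,
          (ψ : ℝ → ℝ) =ᵐ[volume.restrict (Set.Icc (0 : ℝ) 1)] g ∧
          (∀ x ∉ Set.Icc a b, g x = 0) ∧
          (∀ x ∈ Set.Icc a b, 0 < g x) ∧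
          (∀ x ∈ Set.Icc a b, ∀ y ∈ Set.Icc a b, |g x - g y| ≤ C * g x * |x - y|) ∧
          ∫ x in Set.Icc (0 : ℝ) 1, g x = 1} := by
  have hC₀ : 0 < C := zero_lt_one.trans_le hC
  change IsCompact (densityClass C)
  rw [densityClass_eq_image hC₀]
  exact (isCompact_paramSet hC₀.le).image continuous_profileL1
end
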